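/- arXiv:1307.4281 — 4 statements merged into one kernel-verified Lean document; each statement's English description precedes it below -/
import Mathlib

section
/- Let A be an n×n Hermitian matrix over ℍ with Ind A = k, and let X be a matrix satisfying A^{k+1}X = A^k, XAX = X and AX = XA. Then for all sufficiently small real λ > 0 the matrix λI + A^{k+1} is invertible, and both (λI + A^{k+1})^{−1}·A^k and A^k·(λI + A^{k+1})^{−1} converge (entrywise in ℍ) to X as λ → 0⁺. -/
/-!
Write `P = A X`, an idempotent commuting with `A` and `X`, and, for `t ≠ 0`,
`Z_t = t⁻¹ (1 - P) + X^(k+1)`. The Drazin equations give `A^(k+1) (1 - P) = 0` and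
`A^(k+1) X^(k+1) = P`, hence `(t + A^(k+1)) Z_t = Z_t (t + A^(k+1)) = 1 + t X^(k+1)`, and
also `Z_t A^k = A^k Z_t = X`. For small `t` the element `1 + t X^(k+1)` is a unit, so
`t + A^(k+1)` is one too, with `(t + A^(k+1))⁻¹ A^k = (1 + t X^(k+1))⁻¹ X` and
`A^k (t + A^(k+1))⁻¹ = X (1 + t X^(k+1))⁻¹`; both tend to `X` by continuity of inversion
at `1`.
-/

open Quaternion Matrix Finset

noncomputable section

/-- Ordered product of the entries of `A` along the cycle of `σ` containing `x`,
starting at `x`:  `a_{x,σx} · a_{σx,σ²x} ⋯ a_{σ^{c-1}x,x}`. -/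
def cycProd {n : ℕ} (A : Matrix (Fin n) (Fin n) ℍ[ℝ]) (σ : Equiv.Perm (Fin n))
    (x : Fin n) : ℍ[ℝ] :=
  ((List.range (Function.minimalPeriod (⇑σ) x)).map
    (fun t => A ((⇑σ)^[t] x) ((⇑σ)^[t + 1] x))).prod

/-- `x` is the smallest element of its `σ`-cycle. -/
def isLeaderB {n : ℕ} (σ : Equiv.Perm (Fin n)) (x : Fin n) : Bool :=
  (List.range n).all fun t => decide (x ≤ (⇑σ)^[t] x)

/-- `x` lies in the `σ`-cycle of `i`. -/
def inCycleB {n : ℕ} (σ : Equiv.Perm (Fin n)) (i x : Fin n) : Bool :=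
  (List.range n).any fun t => decide ((⇑σ)^[t] i = x)

/-- The increasing list of the smallest elements of the `σ`-cycles other than
the cycle of `i`. -/
def leaders {n : ℕ} (σ : Equiv.Perm (Fin n)) (i : Fin n) : List (Fin n) :=
  (List.finRange n).filter fun x => isLeaderB σ x && !(inCycleB σ i x)

/-- The `i`-th row determinant of a quaternion matrix: the sum over all
permutations, written in left-ordered cycle notation (the cycle of `i` first,
starting with `i`; every other cycle starting with its smallest element, these
smallest elements increasing from left to right), of the sign times the ordered
product of the corresponding entries. -/
def rdet {n : ℕ} (A : Matrix (Fin n) (Fin n) ℍ[ℝ]) (i : Fin n) : ℍ[ℝ] :=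
  ∑ σ : Equiv.Perm (Fin n),
    ((Equiv.Perm.sign σ : ℤ) : ℍ[ℝ]) *
      (cycProd A σ i * ((leaders σ i).map (cycProd A σ)).prod)

/-- The `j`-th column determinant of a quaternion matrix: the sum over all
permutations, written in right-ordered cycle notation (the cycle of `j` last,
ending with `j`; every other cycle ending with its smallest element, these
smallest elements increasing from right to left), of the sign times the ordered
product of the corresponding entries. -/
def cdet {n : ℕ} (A : Matrix (Fin n) (Fin n) ℍ[ℝ]) (j : Fin n) : ℍ[ℝ] :=
  ∑ τ : Equiv.Perm (Fin n),
    ((Equiv.Perm.sign τ : ℤ) : ℍ[ℝ]) *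
      ((((leaders τ j).reverse).map (cycProd A τ)).prod * cycProd A τ j)

/-- The determinant of a (Hermitian) quaternion matrix: the common value of all
row and column determinants. -/
def Hdet : {m : ℕ} → Matrix (Fin m) (Fin m) ℍ[ℝ] → ℍ[ℝ]
  | 0, _ => 1
  | _ + 1, A => rdet A 0

/-- The principal submatrix of `M` with rows and columns indexed by `β`. -/
def principalSub {n : ℕ} (M : Matrix (Fin n) (Fin n) ℍ[ℝ]) (β : Finset (Fin n)) :
    Matrix (Fin β.card) (Fin β.card) ℍ[ℝ] :=
  M.submatrix (⇑(β.orderEmbOfFin rfl)) (⇑(β.orderEmbOfFin rfl))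

/-- The position of `i` inside the increasing enumeration of the finset `β`. -/
def posIn {n : ℕ} (β : Finset (Fin n)) {i : Fin n} (h : i ∈ β) : Fin β.card :=
  (β.orderIsoOfFin rfl).symm ⟨i, h⟩

/-- `Σ_{β ∈ J_{s,n}{i}} cdet_i (M_β^β)`: the sum, over all subsets `β` of
cardinality `s` containing `i`, of the column determinants of the principal
submatrix `M_β^β` taken at the position of `i` within `β`. -/
def cdetPM {n : ℕ} (M : Matrix (Fin n) (Fin n) ℍ[ℝ]) (s : ℕ) (i : Fin n) : ℍ[ℝ] :=
  ∑ β ∈ ((Finset.powersetCard s (Finset.univ : Finset (Fin n))).filter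
      fun β => i ∈ β).attach,
    cdet (principalSub M β.1) (posIn β.1 (Finset.mem_filter.mp β.2).2)

/-- `Σ_{α ∈ I_{s,n}{j}} rdet_j (M_α^α)`: the sum, over all subsets `α` of
cardinality `s` containing `j`, of the row determinants of the principal
submatrix `M_α^α` taken at the position of `j` within `α`. -/
def rdetPM {n : ℕ} (M : Matrix (Fin n) (Fin n) ℍ[ℝ]) (s : ℕ) (j : Fin n) : ℍ[ℝ] :=
  ∑ α ∈ ((Finset.powersetCard s (Finset.univ : Finset (Fin n))).filter
      fun α => j ∈ α).attach,
    rdet (principalSub M α.1) (posIn α.1 (Finset.mem_filter.mp α.2).2)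

/-- The sum of all principal minors of `M` of order `r`. -/
def minorSum {n : ℕ} (M : Matrix (Fin n) (Fin n) ℍ[ℝ]) (r : ℕ) : ℍ[ℝ] :=
  ∑ β ∈ Finset.powersetCard r (Finset.univ : Finset (Fin n)),
    Hdet (principalSub M β)

/-- The (column) rank of a quaternion matrix: the dimension of the span of its
columns as a right `ℍ`-vector space. -/
def qrank {m n : ℕ} (A : Matrix (Fin m) (Fin n) ℍ[ℝ]) : ℕ :=
  Module.finrank ℍ[ℝ]ᵐᵒᵖ
    (Submodule.span ℍ[ℝ]ᵐᵒᵖ (Set.range Aᵀ) : Submodule ℍ[ℝ]ᵐᵒᵖ (Fin m → ℍ[ℝ]))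

/-- `Ind A = k`: `k` is the smallest nonnegative integer with
`rank A^(k+1) = rank A^k`. -/
def isInd {n : ℕ} (A : Matrix (Fin n) (Fin n) ℍ[ℝ]) (k : ℕ) : Prop :=
  qrank (A ^ (k + 1)) = qrank (A ^ k) ∧
    ∀ l < k, qrank (A ^ (l + 1)) ≠ qrank (A ^ l)

/-- `X` is a Drazin inverse of `A` (relative to the index `k`). -/
def isDrazin {n : ℕ} (A X : Matrix (Fin n) (Fin n) ℍ[ℝ]) (k : ℕ) : Prop :=
  A ^ (k + 1) * X = A ^ k ∧ X * A * X = X ∧ A * X = X * A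

end

open Filter Topology

section

variable {R : Type*} [Ring R]

theorem isUnit_of_mul_eq_of_mul_eq {M Z u : R} (hu : IsUnit u) (h₁ : M * Z = u)
    (h₂ : Z * M = u) : IsUnit M :=
  isUnit_iff_exists_and_exists.2
    ⟨⟨Z * Ring.inverse u, by rw [← mul_assoc, h₁, Ring.mul_inverse_cancel u hu]⟩,
      ⟨Ring.inverse u * Z, by rw [mul_assoc, h₂, Ring.inverse_mul_cancel u hu]⟩⟩

theorem Ring.inverse_eq_mul_inverse_of_mul_eq {M Z u : R} (hM : IsUnit M) (hu : IsUnit u)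
    (h : M * Z = u) : Ring.inverse M = Z * Ring.inverse u := by
  rw [← Ring.mul_inverse_cancel_right u (Ring.inverse M) hu, ← h,
    Ring.inverse_mul_cancel_left M Z hM]

theorem Ring.inverse_eq_inverse_mul_of_mul_eq {M Z u : R} (hM : IsUnit M) (hu : IsUnit u)
    (h : Z * M = u) : Ring.inverse M = Ring.inverse u * Z := by
  rw [← Ring.inverse_mul_cancel_left u (Ring.inverse M) hu, ← h,
    Ring.mul_inverse_cancel_right M Z hM]

end

section Drazin

variable {𝕜 R : Type*} [Field 𝕜] [Ring R] [Algebra 𝕜 R] {A X : R} {k : ℕ}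

theorem pow_succ_mul_pow_of_drazin (h₂ : X * A * X = X) (h₃ : A * X = X * A) (m : ℕ) :
    X ^ (m + 1) * A ^ m = X := by
  induction m with
  | zero => simp
  | succ m ih =>
    rw [pow_succ' X, pow_succ A, mul_assoc, ← mul_assoc (X ^ (m + 1)), ih, ← h₃,
      ← mul_assoc, h₂]

theorem smul_one_add_pow_succ_mul_eq_of_drazin (h₁ : A ^ (k + 1) * X = A ^ k)
    (h₂ : X * A * X = X) (h₃ : A * X = X * A) {t : 𝕜} (ht : t ≠ 0) :
    (t • 1 + A ^ (k + 1)) * (t⁻¹ • (1 - A * X) + X ^ (k + 1)) = 1 + t • X ^ (k + 1) ∧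
    (t⁻¹ • (1 - A * X) + X ^ (k + 1)) * (t • 1 + A ^ (k + 1)) = 1 + t • X ^ (k + 1) := by
  have hP : IsIdempotentElem (A * X) := by
    rw [IsIdempotentElem, mul_assoc, ← mul_assoc X, h₂]
  have hc : Commute A X := h₃
  have hBP : A ^ (k + 1) * (A * X) = A ^ (k + 1) := by
    rw [← mul_assoc, ← pow_succ, pow_succ', mul_assoc, h₁, ← pow_succ']
  have hPB : (A * X) * A ^ (k + 1) = A ^ (k + 1) := by
    rw [(((Commute.refl A).mul_left hc.symm).pow_right (k + 1)).eq, hBP]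
  have hBY : A ^ (k + 1) * X ^ (k + 1) = A * X := by
    rw [← hc.mul_pow, hP.pow_succ_eq]
  have hYB : X ^ (k + 1) * A ^ (k + 1) = A * X := by
    rw [← (hc.pow_pow _ _).eq, hBY]
  have hBQ : A ^ (k + 1) * (1 - A * X) = 0 := by rw [mul_sub, mul_one, hBP, sub_self]
  have hQB : (1 - A * X) * A ^ (k + 1) = 0 := by rw [sub_mul, one_mul, hPB, sub_self]
  constructor
  · rw [mul_add, mul_smul_comm, add_mul, smul_mul_assoc, one_mul, hBQ, add_zero, smul_smul,
      inv_mul_cancel₀ ht, one_smul, add_mul, smul_mul_assoc, one_mul, hBY]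
    abel
  · rw [add_mul, smul_mul_assoc, mul_add, mul_smul_comm, mul_one, hQB, add_zero, smul_smul,
      inv_mul_cancel₀ ht, one_smul, mul_add, mul_smul_comm, mul_one, hYB]
    abel

theorem mul_pow_eq_of_drazin (h₁ : A ^ (k + 1) * X = A ^ k)
    (h₂ : X * A * X = X) (h₃ : A * X = X * A) (t : 𝕜) :
    (t⁻¹ • (1 - A * X) + X ^ (k + 1)) * A ^ k = X ∧
    A ^ k * (t⁻¹ • (1 - A * X) + X ^ (k + 1)) = X := by
  have hc : Commute A X := h₃
  have hAkP : A ^ k * (A * X) = A ^ k := by rw [← mul_assoc, ← pow_succ, h₁]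
  have hPAk : (A * X) * A ^ k = A ^ k := by
    rw [(((Commute.refl A).mul_left hc.symm).pow_right k).eq, hAkP]
  have hYAk : X ^ (k + 1) * A ^ k = X := pow_succ_mul_pow_of_drazin h₂ h₃ k
  have hAkY : A ^ k * X ^ (k + 1) = X := by rw [(hc.pow_pow _ _).eq, hYAk]
  constructor
  · rw [add_mul, smul_mul_assoc, sub_mul, one_mul, hPAk, sub_self, smul_zero, zero_add, hYAk]
  · rw [mul_add, mul_smul_comm, mul_sub, mul_one, hAkP, sub_self, smul_zero, zero_add, hAkY]

theorem isUnit_smul_one_add_pow_succ_of_drazin (h₁ : A ^ (k + 1) * X = A ^ k)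
    (h₂ : X * A * X = X) (h₃ : A * X = X * A) {t : 𝕜} (ht : t ≠ 0)
    (hu : IsUnit (1 + t • X ^ (k + 1))) : IsUnit (t • 1 + A ^ (k + 1)) :=
  have h := smul_one_add_pow_succ_mul_eq_of_drazin h₁ h₂ h₃ ht
  isUnit_of_mul_eq_of_mul_eq hu h.1 h.2

theorem inverse_smul_one_add_pow_succ_mul_pow_of_drazin (h₁ : A ^ (k + 1) * X = A ^ k)
    (h₂ : X * A * X = X) (h₃ : A * X = X * A) {t : 𝕜} (ht : t ≠ 0)
    (hu : IsUnit (1 + t • X ^ (k + 1))) :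
    Ring.inverse (t • 1 + A ^ (k + 1)) * A ^ k = Ring.inverse (1 + t • X ^ (k + 1)) * X := by
  rw [Ring.inverse_eq_inverse_mul_of_mul_eq
      (isUnit_smul_one_add_pow_succ_of_drazin h₁ h₂ h₃ ht hu) hu
      (smul_one_add_pow_succ_mul_eq_of_drazin h₁ h₂ h₃ ht).2,
    mul_assoc, (mul_pow_eq_of_drazin h₁ h₂ h₃ t).1]

theorem pow_mul_inverse_smul_one_add_pow_succ_of_drazin (h₁ : A ^ (k + 1) * X = A ^ k)
    (h₂ : X * A * X = X) (h₃ : A * X = X * A) {t : 𝕜} (ht : t ≠ 0)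
    (hu : IsUnit (1 + t • X ^ (k + 1))) :
    A ^ k * Ring.inverse (t • 1 + A ^ (k + 1)) = X * Ring.inverse (1 + t • X ^ (k + 1)) := by
  rw [Ring.inverse_eq_mul_inverse_of_mul_eq
      (isUnit_smul_one_add_pow_succ_of_drazin h₁ h₂ h₃ ht hu) hu
      (smul_one_add_pow_succ_mul_eq_of_drazin h₁ h₂ h₃ ht).1,
    ← mul_assoc, (mul_pow_eq_of_drazin h₁ h₂ h₃ t).2]

end Drazin

section Limits

variable {𝕜 R : Type*} [NormedField 𝕜] [NormedRing R] [NormedAlgebra 𝕜 R]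

theorem tendsto_one_add_smul (Y : R) : Tendsto (fun t : 𝕜 => 1 + t • Y) (𝓝 0) (𝓝 1) := by
  have h : Continuous fun t : 𝕜 => 1 + t • Y := by fun_prop
  simpa using h.tendsto 0

variable [HasSummableGeomSeries R]

theorem eventually_isUnit_one_add_smul (Y : R) : ∀ᶠ t in 𝓝 (0 : 𝕜), IsUnit (1 + t • Y) :=
  tendsto_one_add_smul Y (Units.nhds 1)

theorem tendsto_inverse_one_add_smul (Y : R) :
    Tendsto (fun t : 𝕜 => Ring.inverse (1 + t • Y)) (𝓝 0) (𝓝 1) := by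
  have h := (NormedRing.inverse_continuousAt (1 : Rˣ)).tendsto.comp
    (tendsto_one_add_smul (𝕜 := 𝕜) Y)
  rwa [Units.val_one, Ring.inverse_one] at h

variable {A X : R} {k : ℕ}

theorem eventually_isUnit_smul_one_add_pow_succ_of_drazin (h₁ : A ^ (k + 1) * X = A ^ k)
    (h₂ : X * A * X = X) (h₃ : A * X = X * A) :
    ∀ᶠ t in 𝓝[≠] (0 : 𝕜), IsUnit (t • 1 + A ^ (k + 1)) := by
  filter_upwards [self_mem_nhdsWithin,
    nhdsWithin_le_nhds (eventually_isUnit_one_add_smul (X ^ (k + 1)))] with t ht hu using isUnit_smul_one_add_pow_succ_of_drazin h₁ h₂ h₃ ht hu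

theorem tendsto_inverse_smul_one_add_pow_succ_mul_pow_of_drazin (h₁ : A ^ (k + 1) * X = A ^ k)
    (h₂ : X * A * X = X) (h₃ : A * X = X * A) :
    Tendsto (fun t : 𝕜 => Ring.inverse (t • 1 + A ^ (k + 1)) * A ^ k) (𝓝[≠] 0) (𝓝 X) := by
  have h : Tendsto (fun t : 𝕜 => Ring.inverse (1 + t • X ^ (k + 1)) * X) (𝓝[≠] 0) (𝓝 X) := by
    simpa using ((tendsto_inverse_one_add_smul _).mul_const X).mono_left nhdsWithin_le_nhds
  refine h.congr' ?_
  filter_upwards [self_mem_nhdsWithin,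
    nhdsWithin_le_nhds (eventually_isUnit_one_add_smul (X ^ (k + 1)))] with t ht hu using (inverse_smul_one_add_pow_succ_mul_pow_of_drazin h₁ h₂ h₃ ht hu).symm

theorem tendsto_pow_mul_inverse_smul_one_add_pow_succ_of_drazin (h₁ : A ^ (k + 1) * X = A ^ k)
    (h₂ : X * A * X = X) (h₃ : A * X = X * A) :
    Tendsto (fun t : 𝕜 => A ^ k * Ring.inverse (t • 1 + A ^ (k + 1))) (𝓝[≠] 0) (𝓝 X) := by
  have h : Tendsto (fun t : 𝕜 => X * Ring.inverse (1 + t • X ^ (k + 1))) (𝓝[≠] 0) (𝓝 X) := by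
    simpa using ((tendsto_inverse_one_add_smul _).const_mul X).mono_left nhdsWithin_le_nhds
  refine h.congr' ?_
  filter_upwards [self_mem_nhdsWithin,
    nhdsWithin_le_nhds (eventually_isUnit_one_add_smul (X ^ (k + 1)))] with t ht hu using (pow_mul_inverse_smul_one_add_pow_succ_of_drazin h₁ h₂ h₃ ht hu).symm

end Limits

theorem stmt11_general {n : ℕ} (A X : Matrix (Fin n) (Fin n) ℍ[ℝ])
    (k : ℕ) (hX : isDrazin A X k) :
    (∃ ε > (0 : ℝ), ∀ lam : ℝ, 0 < lam → lam < ε →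
      IsUnit ((lam : ℍ[ℝ]) • (1 : Matrix (Fin n) (Fin n) ℍ[ℝ]) + A ^ (k + 1))) ∧
    (∀ i j : Fin n, Filter.Tendsto
      (fun lam : ℝ =>
        (Ring.inverse ((lam : ℍ[ℝ]) • (1 : Matrix (Fin n) (Fin n) ℍ[ℝ]) + A ^ (k + 1))
          * A ^ k) i j)
      (nhdsWithin 0 (Set.Ioi 0)) (nhds (X i j))) ∧
    (∀ i j : Fin n, Filter.Tendsto
      (fun lam : ℝ =>
        (A ^ k *
          Ring.inverse ((lam : ℍ[ℝ]) • (1 : Matrix (Fin n) (Fin n) ℍ[ℝ]) + A ^ (k + 1))) i j)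
      (nhdsWithin 0 (Set.Ioi 0)) (nhds (X i j))) := by
  obtain ⟨h₁, h₂, h₃⟩ := hX
  have hsmul (lam : ℝ) : (lam : ℍ[ℝ]) • (1 : Matrix (Fin n) (Fin n) ℍ[ℝ]) = lam • 1 :=
    algebraMap_smul ℍ[ℝ] lam 1
  simp only [hsmul]
  let := (Matrix.linftyOpNormedRing : NormedRing (Matrix (Fin n) (Fin n) ℍ[ℝ]))
  let := (Matrix.linftyOpNormedAlgebra : NormedAlgebra ℝ (Matrix (Fin n) (Fin n) ℍ[ℝ]))
  let : CompleteSpace (Matrix (Fin n) (Fin n) ℍ[ℝ]) := FiniteDimensional.complete ℝ _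
  have hGT : 𝓝[>] (0 : ℝ) ≤ 𝓝[≠] 0 := nhdsGT_le_nhdsNE 0
  obtain ⟨ε, hε, hunit⟩ := mem_nhdsGT_iff_exists_Ioo_subset.1
    (hGT (eventually_isUnit_smul_one_add_pow_succ_of_drazin h₁ h₂ h₃))
  refine ⟨⟨ε, hε, fun lam h0 hlt => hunit ⟨h0, hlt⟩⟩, fun i j => ?_, fun i j => ?_⟩
  · exact tendsto_pi_nhds.1 (tendsto_pi_nhds.1
      ((tendsto_inverse_smul_one_add_pow_succ_mul_pow_of_drazin h₁ h₂ h₃).mono_left hGT) i) j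
  · exact tendsto_pi_nhds.1 (tendsto_pi_nhds.1
      ((tendsto_pow_mul_inverse_smul_one_add_pow_succ_of_drazin h₁ h₂ h₃).mono_left hGT) i) j

/-- limit representation of the Drazin inverse of a Hermitian
quaternion matrix: for all sufficiently small real `λ > 0` the matrix
`λI + A^{k+1}` is invertible, and both `(λI + A^{k+1})⁻¹ A^k` and
`A^k (λI + A^{k+1})⁻¹` converge entrywise to the Drazin inverse `X`
as `λ → 0⁺`. -/
theorem stmt11 {n : ℕ} (A X : Matrix (Fin n) (Fin n) ℍ[ℝ]) (hA : A.IsHermitian)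
    (k : ℕ) (hk : isInd A k) (hX : isDrazin A X k) :
    (∃ ε > (0 : ℝ), ∀ lam : ℝ, 0 < lam → lam < ε →
      IsUnit ((lam : ℍ[ℝ]) • (1 : Matrix (Fin n) (Fin n) ℍ[ℝ]) + A ^ (k + 1))) ∧
    (∀ i j : Fin n, Filter.Tendsto
      (fun lam : ℝ =>
        (Ring.inverse ((lam : ℍ[ℝ]) • (1 : Matrix (Fin n) (Fin n) ℍ[ℝ]) + A ^ (k + 1))
          * A ^ k) i j)
      (nhdsWithin 0 (Set.Ioi 0)) (nhds (X i j))) ∧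
    (∀ i j : Fin n, Filter.Tendsto
      (fun lam : ℝ =>
        (A ^ k *
          Ring.inverse ((lam : ℍ[ℝ]) • (1 : Matrix (Fin n) (Fin n) ℍ[ℝ]) + A ^ (k + 1))) i j)
      (nhdsWithin 0 (Set.Ioi 0)) (nhds (X i j))) :=
  stmt11_general A X k hX
end

section
/- Let A be an n×n matrix over ℍ with Ind A = k. Then for all i, j ∈ {1,…,n}, the rank of the matrix (A^{k+1})_{.i}(a_{.j}^{(k)}), obtained from A^{k+1} by replacing its i-th column with the j-th column of A^k, is at most the rank of A^{k+1}. -/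
open Quaternion Matrix Finset

/-!
The column space of `A^{k+1}` is contained in that of `A^k`, and at the index the two have the
same dimension, so they coincide. Hence the `j`-th column of `A^k` already lies in the column
space of `A^{k+1}`, and putting it in place of a column of `A^{k+1}` cannot enlarge that space.
-/

instance {R : Type*} [Semiring R] : Module.Finite Rᵐᵒᵖ R :=
  Module.Finite.of_surjective
    ({ toFun := MulOpposite.unop, map_add' := fun _ _ => rfl,
       map_smul' := fun _ _ => rfl } : Rᵐᵒᵖ →ₗ[Rᵐᵒᵖ] R)
    MulOpposite.unop_surjective

theorem Submodule.span_range_update_le {R M ι : Type*} [Semiring R] [AddCommMonoid M]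
    [Module R M] [DecidableEq ι] {v : ι → M} {x : M} (hx : x ∈ Submodule.span R (Set.range v))
    (i : ι) : Submodule.span R (Set.range (Function.update v i x)) ≤
      Submodule.span R (Set.range v) := by
  rw [Submodule.span_le]
  rintro _ ⟨l, rfl⟩
  rcases eq_or_ne l i with rfl | hl
  · simpa using hx
  · rw [Function.update_of_ne hl]
    exact Submodule.subset_span ⟨l, rfl⟩

namespace Matrix

variable {R : Type*} [Semiring R] {l m n : Type*}

def colSpan (A : Matrix m n R) : Submodule Rᵐᵒᵖ (m → R) :=
  Submodule.span Rᵐᵒᵖ (Set.range Aᵀ)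

theorem col_mem_colSpan (A : Matrix m n R) (j : n) : (fun i => A i j) ∈ A.colSpan :=
  Submodule.subset_span ⟨j, rfl⟩

theorem colSpan_mul_le [Fintype m] (A : Matrix l m R) (B : Matrix m n R) :
    (A * B).colSpan ≤ A.colSpan := by
  rw [colSpan, Submodule.span_le]
  rintro _ ⟨j, rfl⟩
  change A *ᵥ Bᵀ j ∈ A.colSpan
  rw [mulVec_eq_sum]
  exact Submodule.sum_mem _ fun p _ => Submodule.smul_mem _ _ (col_mem_colSpan A p)

theorem colSpan_updateCol_le [DecidableEq n] {M : Matrix m n R} {v : m → R}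
    (hv : v ∈ M.colSpan) (i : n) : (M.updateCol i v).colSpan ≤ M.colSpan := by
  rw [colSpan, ← updateRow_transpose]
  exact Submodule.span_range_update_le hv i

theorem colSpan_pow_succ_eq_of_finrank_eq {K : Type*} [DivisionRing K] [Fintype n]
    [DecidableEq n] {A : Matrix n n K} {k : ℕ}
    (h : Module.finrank Kᵐᵒᵖ (A ^ (k + 1)).colSpan = Module.finrank Kᵐᵒᵖ (A ^ k).colSpan) :
    (A ^ (k + 1)).colSpan = (A ^ k).colSpan :=
  Submodule.eq_of_le_of_finrank_eq (pow_succ A k ▸ colSpan_mul_le _ _) h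

end Matrix

theorem qrank_eq_finrank_colSpan {m n : ℕ} (A : Matrix (Fin m) (Fin n) ℍ[ℝ]) :
    qrank A = Module.finrank ℍ[ℝ]ᵐᵒᵖ A.colSpan :=
  rfl

/-- replacing the `i`-th column of `A^{k+1}` by the `j`-th column
of `A^k` does not increase the rank beyond that of `A^{k+1}`. -/
theorem stmt12 {n : ℕ} (A : Matrix (Fin n) (Fin n) ℍ[ℝ]) (k : ℕ)
    (hk : isInd A k) (i j : Fin n) :
    qrank ((A ^ (k + 1)).updateCol i fun l => (A ^ k) l j) ≤
      qrank (A ^ (k + 1)) := by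
  have hspan : (A ^ (k + 1)).colSpan = (A ^ k).colSpan := by
    apply colSpan_pow_succ_eq_of_finrank_eq
    simpa only [qrank_eq_finrank_colSpan] using hk.1
  rw [qrank_eq_finrank_colSpan, qrank_eq_finrank_colSpan]
  apply Submodule.finrank_mono
  apply colSpan_updateCol_le
  rw [hspan]
  exact col_mem_colSpan _ j
end

section
/- Let A be an n×n matrix over ℍ with Ind A = k. Then for all i, j ∈ {1,…,n}, the rank of the matrix (A^{k+1})_{i.}(a_{j.}^{(k)}), obtained from A^{k+1} by replacing its i-th row with the j-th row of A^k, is at most the rank of A^{k+1}. -/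
/-! The modified matrix factors as `A' * A^k`, where `A'` is `A` with its `i`-th row replaced by
the `j`-th unit row; a left factor cannot raise the column rank, and `rank A^k = rank A^(k+1)`. -/

open Quaternion Matrix Finset

theorem Matrix.updateRow_single_one_mul {R : Type*} [NonAssocSemiring R] {l m n : Type*}
    [Fintype m] [DecidableEq l] [DecidableEq m] (B : Matrix l m R) (C : Matrix m n R)
    (i : l) (j : m) :
    B.updateRow i (Pi.single j 1) * C = (B * C).updateRow i (C j) := by
  rw [updateRow_mul, single_one_vecMul]
  rfl

instance Module.Finite.self_mulOpposite (R : Type*) [Semiring R] : Module.Finite Rᵐᵒᵖ R :=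
  .of_surjective (LinearMap.toSpanSingleton Rᵐᵒᵖ R 1) fun x => ⟨.op x, by simp⟩

lemma qrank_mul_le_right {m n p : ℕ} (B : Matrix (Fin m) (Fin n) ℍ[ℝ])
    (C : Matrix (Fin n) (Fin p) ℍ[ℝ]) : qrank (B * C) ≤ qrank C := by
  -- column `l` of `B * C` is, by definition, `B *ᵥ` column `l` of `C`
  have hcols : Set.range (B * C)ᵀ = mulVecBilin ℍ[ℝ] ℍ[ℝ]ᵐᵒᵖ B '' Set.range Cᵀ :=
    Set.range_comp (mulVecBilin ℍ[ℝ] ℍ[ℝ]ᵐᵒᵖ B) Cᵀ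
  unfold qrank
  rw [hcols, ← Submodule.map_span]
  exact Submodule.finrank_map_le _ _

lemma qrank_updateRow_mul_row_le {m n p : ℕ} (B : Matrix (Fin m) (Fin n) ℍ[ℝ])
    (C : Matrix (Fin n) (Fin p) ℍ[ℝ]) (i : Fin m) (j : Fin n) :
    qrank ((B * C).updateRow i (C j)) ≤ qrank C := by
  rw [← updateRow_single_one_mul]
  exact qrank_mul_le_right _ _

/-- replacing the `i`-th row of `A^{k+1}` by the `j`-th row of
`A^k` does not increase the rank beyond that of `A^{k+1}`. -/
theorem stmt13 {n : ℕ} (A : Matrix (Fin n) (Fin n) ℍ[ℝ]) (k : ℕ)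
    (hk : isInd A k) (i j : Fin n) :
    qrank ((A ^ (k + 1)).updateRow i fun l => (A ^ k) j l) ≤
      qrank (A ^ (k + 1)) := by
  rw [hk.1, pow_succ']
  exact qrank_updateRow_mul_row_le A (A ^ k) i j
end

section
/- Let A be an n×n Hermitian matrix over ℍ with Ind A = k, and let t be a real number. Then for all i, j ∈ {1,…,n}, rdet_j ((tI + A^{k+1})_{j.}(a_{i.}^{(k)})) = r₁^{(ij)} t^{n−1} + r₂^{(ij)} t^{n−2} + ⋯ + r_n^{(ij)}, where r_n^{(ij)} = rdet_j ((A^{k+1})_{j.}(a_{i.}^{(k)})) and, for 1 ≤ s ≤ n−1, r_s^{(ij)} = Σ_{α∈I_{s,n}{j}} rdet_j ( ((A^{k+1})_{j.}(a_{i.}^{(k)}))_α^α ), the sum of the j-th row determinants of the order-s principal submatrices, containing the index j, of the matrix obtained from A^{k+1} by replacing its j-th row with the i-th row of A^k. -/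
open Quaternion Matrix Finset

/-!
Write the matrix as `D + M`, where `M` is `A^{k+1}` with its `j`-th row replaced by
`a_{i.}^{(k)}` and `D` is the real diagonal matrix with entry `t` off `j` and `0` at `j`.
In a term of `rdet_j`, the diagonal of `D` is met only at fixed points of `σ`, which are
one-element cycles among the leaders and never the cycle of `j`. As `t` is central, expanding
these factors yields, for each set `S ∌ j` of fixed points, `t^|S|` times the `σ`-term of `M`
with the cycles in `S` deleted. Permutations fixing `S` pointwise are the permutations of
`β = Sᶜ`, and the increasing enumeration of `β` preserves left-ordered cycle notation, so these
terms add up to `rdet_j (M_β^β)`. Grouping the sets `β ∋ j` by their size `s` gives the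
coefficient of `t^{n-s}`.
-/

open Equiv Function

lemma List.prod_map_add_algebraMap {K R ι : Type*} [CommSemiring K] [Semiring R] [Algebra K R]
    [DecidableEq ι] (f : ι → R) (c : ι → K) {L : List ι} (hL : L.Nodup) :
    (L.map fun x => f x + algebraMap K R (c x)).prod =
      ∑ S ∈ L.toFinset.powerset,
        algebraMap K R (∏ x ∈ S, c x) * ((L.filter (· ∉ S)).map f).prod := by
  induction L with
  | nil => simp
  | cons a L ih =>
    obtain ⟨ha, hL⟩ := List.nodup_cons.1 hL
    have haL : a ∉ L.toFinset := by simpa using ha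
    rw [List.map_cons, List.prod_cons, ih hL, List.toFinset_cons,
      sum_powerset_insert haL, add_mul, mul_sum, mul_sum]
    congr 1 <;> refine sum_congr rfl fun S hS => ?_
    · have haS : a ∉ S := fun h => haL (mem_powerset.1 hS h)
      rw [List.filter_cons_of_pos (by simpa using haS), List.map_cons, List.prod_cons,
        Algebra.left_comm]
    · have haS : a ∉ S := fun h => haL (mem_powerset.1 hS h)
      have hfilter : (a :: L).filter (· ∉ insert a S) = L.filter (· ∉ S) := by
        rw [List.filter_cons_of_neg (by simp)]
        exact List.filter_congr fun x hx => by
          simp [mem_insert, show x ≠ a from fun h => ha (h ▸ hx)]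
      rw [hfilter, prod_insert haS, map_mul, mul_assoc]

section

variable {m n : ℕ}

lemma exists_iterate_lt_eq (σ : Perm (Fin n)) (x : Fin n) (t : ℕ) :
    ∃ u < n, σ^[u] x = σ^[t] x := by
  have hpos : 0 < minimalPeriod σ x :=
    IsPeriodicPt.minimalPeriod_pos (orderOf_pos σ) <| by
      rw [IsPeriodicPt, IsFixedPt, Perm.iterate_eq_pow, pow_orderOf_eq_one]; rfl
  have hle : minimalPeriod σ x ≤ n := by
    simpa using minimalPeriod_le_card (f := σ) (x := x)
  exact ⟨t % minimalPeriod σ x, (Nat.mod_lt _ hpos).trans_le hle, iterate_mod_minimalPeriod_eq⟩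

lemma mem_leaders_iff {σ : Perm (Fin n)} {i x : Fin n} :
    x ∈ leaders σ i ↔ (∀ t, x ≤ σ^[t] x) ∧ ∀ t, σ^[t] i ≠ x := by
  simp only [leaders, isLeaderB, inCycleB, List.mem_filter, List.mem_finRange, true_and,
    Bool.and_eq_true, Bool.not_eq_true', List.all_eq_true, List.any_eq_false, List.mem_range,
    decide_eq_true_eq]
  refine and_congr ⟨fun h t => ?_, fun h t _ => h t⟩ ⟨fun h t => ?_, fun h t _ => h t⟩
  · obtain ⟨u, hu, hux⟩ := exists_iterate_lt_eq σ x t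
    exact hux ▸ h u hu
  · obtain ⟨u, hu, hux⟩ := exists_iterate_lt_eq σ i t
    exact hux ▸ h u hu

lemma leaders_pairwise_lt (σ : Perm (Fin n)) (i : Fin n) : (leaders σ i).Pairwise (· < ·) :=
  (List.pairwise_lt_finRange n).sublist List.filter_sublist

lemma leaders_nodup (σ : Perm (Fin n)) (i : Fin n) : (leaders σ i).Nodup :=
  (leaders_pairwise_lt σ i).nodup

lemma ne_of_mem_leaders {σ : Perm (Fin n)} {i x : Fin n} (hx : x ∈ leaders σ i) : x ≠ i :=
  fun h => (mem_leaders_iff.1 hx).2 0 h.symm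

lemma mem_leaders_of_fixed {σ : Perm (Fin n)} {i x : Fin n} (hfix : σ x = x) (hxi : x ≠ i) :
    x ∈ leaders σ i := by
  refine mem_leaders_iff.2 ⟨fun t => (iterate_fixed hfix t).ge, fun t h => hxi ?_⟩
  exact (σ.injective.iterate t (h.trans (iterate_fixed hfix t).symm)).symm

lemma cycProd_congr {A B : Matrix (Fin n) (Fin n) ℍ[ℝ]} {σ : Perm (Fin n)} {x : Fin n}
    (h : ∀ t, A (σ^[t] x) (σ^[t + 1] x) = B (σ^[t] x) (σ^[t + 1] x)) :
    cycProd A σ x = cycProd B σ x :=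
  congrArg List.prod (List.map_congr_left fun t _ => h t)

lemma cycProd_of_fixed (A : Matrix (Fin n) (Fin n) ℍ[ℝ]) {σ : Perm (Fin n)} {x : Fin n}
    (h : σ x = x) : cycProd A σ x = A x x := by
  simp [cycProd, minimalPeriod_eq_one_iff_isFixedPt.2 h, h]

lemma cycProd_diagonal_add (D : Fin n → ℍ[ℝ]) (M : Matrix (Fin n) (Fin n) ℍ[ℝ])
    (σ : Perm (Fin n)) (x : Fin n) :
    cycProd (diagonal D + M) σ x = cycProd M σ x + if σ x = x then D x else 0 := by
  split_ifs with hfix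
  · rw [cycProd_of_fixed _ hfix, cycProd_of_fixed _ hfix, Matrix.add_apply, diagonal_apply_eq,
      add_comm]
  · rw [add_zero]
    refine cycProd_congr fun t => ?_
    have hne : σ^[t + 1] x ≠ σ^[t] x := fun h =>
      hfix (σ.injective.iterate t (by rwa [← iterate_succ_apply]))
    rw [Matrix.add_apply, diagonal_apply_ne _ hne.symm, zero_add]

section Semiconj

variable (e : Fin m ↪o Fin n) {σ : Perm (Fin n)} {τ : Perm (Fin m)}

lemma minimalPeriod_apply_of_semiconj (h : Semiconj e τ σ) (y : Fin m) :
    minimalPeriod σ (e y) = minimalPeriod τ y :=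
  minimalPeriod_eq_minimalPeriod_iff.2 fun t => by
    simp only [IsPeriodicPt, IsFixedPt, ← (h.iterate_right t).eq, e.injective.eq_iff]

lemma cycProd_apply_of_semiconj (h : Semiconj e τ σ) (M : Matrix (Fin n) (Fin n) ℍ[ℝ])
    (y : Fin m) :
    cycProd M σ (e y) = cycProd (M.submatrix e e) τ y := by
  simp only [cycProd, minimalPeriod_apply_of_semiconj e h, ← (h.iterate_right _).eq,
    submatrix_apply]

lemma apply_mem_leaders_iff_of_semiconj (h : Semiconj e τ σ) (y z : Fin m) :
    e y ∈ leaders σ (e z) ↔ y ∈ leaders τ z := by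
  simp only [mem_leaders_iff, ← (h.iterate_right _).eq, e.le_iff_le, e.injective.ne_iff]

end Semiconj

lemma leaders_filter_mem_of_semiconj (α : Finset (Fin n)) {σ : Perm (Fin n)}
    {τ : Perm (Fin α.card)} (h : Semiconj (α.orderEmbOfFin rfl) τ σ) (z : Fin α.card) :
    (leaders σ (α.orderEmbOfFin rfl z)).filter (· ∈ α) =
      (leaders τ z).map (α.orderEmbOfFin rfl) := by
  refine ((leaders_pairwise_lt σ _).sublist List.filter_sublist).eq_of_mem_iff
    ((leaders_pairwise_lt τ z).map _ fun _ _ => (α.orderEmbOfFin rfl).lt_iff_lt.2) fun x => ?_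
  simp only [List.mem_filter, List.mem_map, decide_eq_true_eq]
  constructor
  · rintro ⟨hx, hxα⟩
    obtain ⟨y, rfl⟩ : x ∈ Set.range (α.orderEmbOfFin rfl) := by
      rwa [range_orderEmbOfFin]
    exact ⟨y, (apply_mem_leaders_iff_of_semiconj _ h y z).1 hx, rfl⟩
  · rintro ⟨y, hy, rfl⟩
    exact ⟨(apply_mem_leaders_iff_of_semiconj _ h y z).2 hy, α.orderEmbOfFin_mem rfl y⟩

def permFixingEquiv (α : Finset (Fin n)) :
    Perm (Fin α.card) ≃ {σ : Perm (Fin n) // ∀ x, x ∉ α → σ x = x} :=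
  (α.orderIsoOfFin rfl).toEquiv.permCongr.trans (Perm.subtypeEquivSubtypePerm (· ∈ α))

lemma semiconj_permFixingEquiv (α : Finset (Fin n)) (τ : Perm (Fin α.card)) :
    Semiconj (α.orderEmbOfFin rfl) τ (permFixingEquiv α τ).1 := fun y => by
  simp [permFixingEquiv, ← coe_orderIsoOfFin_apply]

lemma sign_permFixingEquiv (α : Finset (Fin n)) (τ : Perm (Fin α.card)) :
    Perm.sign (permFixingEquiv α τ).1 = Perm.sign τ := by
  simp [permFixingEquiv]

lemma orderEmbOfFin_posIn (α : Finset (Fin n)) {j : Fin n} (hj : j ∈ α) :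
    α.orderEmbOfFin rfl (posIn α hj) = j := by
  simp [posIn, ← coe_orderIsoOfFin_apply]

theorem rdet_principalSub (M : Matrix (Fin n) (Fin n) ℍ[ℝ]) (α : Finset (Fin n)) {j : Fin n}
    (hj : j ∈ α) :
    rdet (principalSub M α) (posIn α hj) =
      ∑ σ ∈ univ.filter fun σ : Perm (Fin n) => ∀ x, x ∉ α → σ x = x,
        ((Perm.sign σ : ℤ) : ℍ[ℝ]) *
          (cycProd M σ j * (((leaders σ j).filter (· ∈ α)).map (cycProd M σ)).prod) := by
  rw [sum_subtype (p := fun σ : Perm (Fin n) => ∀ x, x ∉ α → σ x = x) _ fun σ => by simp,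
    ← (permFixingEquiv α).sum_comp, rdet]
  refine sum_congr rfl fun τ _ => ?_
  have h := semiconj_permFixingEquiv α τ
  conv_rhs => rw [← orderEmbOfFin_posIn α hj]
  rw [sign_permFixingEquiv, leaders_filter_mem_of_semiconj α h, List.map_map,
    cycProd_apply_of_semiconj _ h]
  congr 4
  exact funext fun y => (cycProd_apply_of_semiconj _ h M y).symm

/-- The paper's `rdet_j (M_β^β)`, taken as `0` when `j ∉ β`. -/
noncomputable def principalRdet (M : Matrix (Fin n) (Fin n) ℍ[ℝ]) (j : Fin n)
    (β : Finset (Fin n)) : ℍ[ℝ] :=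
  if h : j ∈ β then rdet (principalSub M β) (posIn β h) else 0

lemma sum_powerset_erase_eq_sum_compl {M : Type*} [AddCommMonoid M] (j : Fin n)
    (F : Finset (Fin n) → M) :
    ∑ S ∈ (univ.erase j).powerset, F S = ∑ β ∈ univ.filter (j ∈ ·), F βᶜ := by
  refine sum_nbij' (fun S => Sᶜ) (fun β => βᶜ) (fun S hS => ?_) (fun β hβ => ?_)
    (fun S _ => compl_compl S) (fun β _ => compl_compl β) (fun S _ => by rw [compl_compl])
  · simpa using fun h => (mem_erase.1 (mem_powerset.1 hS h)).1 rfl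
  · simpa [subset_iff] using fun x hx h => hx (h ▸ (mem_filter.1 hβ).2)

theorem rdet_diagonal_add (M : Matrix (Fin n) (Fin n) ℍ[ℝ]) (d : Fin n → ℝ) {j : Fin n}
    (hd : d j = 0) :
    rdet (diagonal (fun l => (d l : ℍ[ℝ])) + M) j =
      ∑ β ∈ univ.filter (j ∈ ·),
        ((∏ x ∈ βᶜ, d x : ℝ) : ℍ[ℝ]) * principalRdet M j β := by
  set N := diagonal (fun l => (d l : ℍ[ℝ])) + M
  set c : Perm (Fin n) → Fin n → ℝ := fun σ x => if σ x = x then d x else 0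
  have hcyc (σ : Perm (Fin n)) (x : Fin n) :
      cycProd N σ x = cycProd M σ x + algebraMap ℝ ℍ[ℝ] (c σ x) := by
    rw [cycProd_diagonal_add, Quaternion.algebraMap_def]
    split_ifs <;> simp [c, *]
  have hσ (σ : Perm (Fin n)) :
      ((Perm.sign σ : ℤ) : ℍ[ℝ]) *
          (cycProd N σ j * ((leaders σ j).map (cycProd N σ)).prod) =
        ∑ S ∈ (univ.erase j).powerset, algebraMap ℝ ℍ[ℝ] (∏ x ∈ S, c σ x) *
          (((Perm.sign σ : ℤ) : ℍ[ℝ]) *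
            (cycProd M σ j * (((leaders σ j).filter (· ∉ S)).map (cycProd M σ)).prod)) := by
    have hsub : (leaders σ j).toFinset.powerset ⊆ (univ.erase j).powerset :=
      powerset_mono.2 fun x hx =>
        mem_erase.2 ⟨ne_of_mem_leaders (List.mem_toFinset.1 hx), mem_univ x⟩
    rw [hcyc σ j, show c σ j = 0 by simp [c, hd], map_zero, add_zero,
      List.map_congr_left fun x _ => hcyc σ x,
      List.prod_map_add_algebraMap _ _ (leaders_nodup σ j), mul_sum, mul_sum,
      ← sum_subset hsub]
    · exact sum_congr rfl fun S _ => by rw [Algebra.left_comm, Algebra.left_comm]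
    · intro S hS hS'
      obtain ⟨x, hxS, hx⟩ := not_subset.1 (mt mem_powerset.2 hS')
      have hxj : x ≠ j := (mem_erase.1 (mem_powerset.1 hS hxS)).1
      have hfix : σ x ≠ x := fun h => hx (List.mem_toFinset.2 (mem_leaders_of_fixed h hxj))
      rw [prod_eq_zero hxS (if_neg hfix), map_zero, zero_mul]
  rw [rdet, sum_congr rfl fun σ _ => hσ σ, Finset.sum_comm,
    sum_powerset_erase_eq_sum_compl j]
  refine sum_congr rfl fun β hβ => ?_
  rw [principalRdet, dif_pos (mem_filter.1 hβ).2, rdet_principalSub, mul_sum,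
    sum_filter]
  refine sum_congr rfl fun σ _ => ?_
  simp only [c, prod_ite_zero, mem_compl, not_not, ← Quaternion.algebraMap_def]
  split_ifs <;> simp

lemma rdetPM_eq_sum_principalRdet (M : Matrix (Fin n) (Fin n) ℍ[ℝ]) (s : ℕ) (j : Fin n) :
    rdetPM M s j = ∑ β ∈ (powersetCard s univ).filter (j ∈ ·), principalRdet M j β := by
  rw [rdetPM, ← sum_attach _ (principalRdet M j)]
  refine sum_congr rfl ?_
  rintro ⟨β, hβ⟩ -
  exact (dif_pos (mem_filter.1 hβ).2 : principalRdet M j β = _).symm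

lemma rdetPM_self (M : Matrix (Fin n) (Fin n) ℍ[ℝ]) (j : Fin n) : rdetPM M n j = rdet M j := by
  have huniv : powersetCard n (univ : Finset (Fin n)) = {univ} := by
    simpa using powersetCard_self (univ : Finset (Fin n))
  rw [rdetPM_eq_sum_principalRdet, huniv, filter_singleton, if_pos (mem_univ j),
    sum_singleton, principalRdet, dif_pos (mem_univ j), rdet_principalSub, rdet]
  simp

lemma sum_principalRdet_eq_sum_rdetPM (M : Matrix (Fin n) (Fin n) ℍ[ℝ]) (j : Fin n)
    (g : ℕ → ℝ) :
    ∑ β ∈ univ.filter (j ∈ ·), ((g β.card : ℝ) : ℍ[ℝ]) * principalRdet M j β =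
      ∑ s ∈ Icc 1 n, (g s : ℍ[ℝ]) * rdetPM M s j := by
  have hcard (β : Finset (Fin n)) (hβ : β ∈ univ.filter (j ∈ ·)) : β.card ∈ Icc 1 n :=
    mem_Icc.2 ⟨card_pos.2 ⟨j, (mem_filter.1 hβ).2⟩, by simpa using card_le_univ β⟩
  rw [← sum_fiberwise_of_maps_to hcard]
  refine sum_congr rfl fun s _ => ?_
  have hfiber : (univ.filter (j ∈ ·)).filter (·.card = s) =
      (powersetCard s univ).filter (j ∈ ·) := by
    ext β; simp [mem_powersetCard, and_comm]
  rw [hfiber, rdetPM_eq_sum_principalRdet, mul_sum]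
  exact sum_congr rfl fun β hβ => by
    rw [(mem_powersetCard.1 (mem_filter.1 hβ).1).2]

lemma updateRow_smul_one_add (t : ℝ) (B : Matrix (Fin n) (Fin n) ℍ[ℝ]) (j : Fin n)
    (v : Fin n → ℍ[ℝ]) :
    ((t : ℍ[ℝ]) • (1 : Matrix (Fin n) (Fin n) ℍ[ℝ]) + B).updateRow j v =
      diagonal (fun l => ((if l = j then 0 else t : ℝ) : ℍ[ℝ])) + B.updateRow j v := by
  refine Matrix.ext fun l m => ?_
  by_cases hl : l = j
  · simp [hl, diagonal_apply]
  · simp [hl, one_apply, diagonal_apply]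

end

theorem stmt15_general {n : ℕ} (A : Matrix (Fin n) (Fin n) ℍ[ℝ])
    (k : ℕ) (t : ℝ) (i j : Fin n) (r : ℕ → ℍ[ℝ])
    (hrn : r n = rdet ((A ^ (k + 1)).updateRow j fun l => (A ^ k) i l) j)
    (hrs : ∀ s, 1 ≤ s → s ≤ n - 1 →
      r s = rdetPM ((A ^ (k + 1)).updateRow j fun l => (A ^ k) i l) s j) :
    rdet (((t : ℍ[ℝ]) • (1 : Matrix (Fin n) (Fin n) ℍ[ℝ]) + A ^ (k + 1)).updateRow j
        fun l => (A ^ k) i l) j =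
      ∑ s ∈ Finset.Icc 1 n, r s * (t : ℍ[ℝ]) ^ (n - s) := by
  set M := (A ^ (k + 1)).updateRow j fun l => (A ^ k) i l
  have hcoef : ∀ β ∈ univ.filter (j ∈ ·),
      ∏ x ∈ βᶜ, (if x = j then 0 else t) = t ^ (n - β.card) := fun β hβ => by
    have hne : ∀ x ∈ βᶜ, x ≠ j := fun x hx h => mem_compl.1 hx (h ▸ (mem_filter.1 hβ).2)
    rw [prod_congr rfl fun x hx => if_neg (hne x hx), prod_const, card_compl, Fintype.card_fin]
  rw [updateRow_smul_one_add, rdet_diagonal_add _ _ (if_pos rfl),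
    sum_congr rfl fun β hβ => by rw [hcoef β hβ],
    sum_principalRdet_eq_sum_rdetPM M j fun s => t ^ (n - s)]
  refine sum_congr rfl fun s hs => ?_
  obtain ⟨hs1, hsn⟩ := mem_Icc.1 hs
  have hr : r s = rdetPM M s j := by
    rcases hsn.lt_or_eq with hlt | rfl
    · exact hrs s hs1 (Nat.le_sub_one_of_lt hlt)
    · rw [hrn, rdetPM_self]
  rw [hr, ← Quaternion.coe_pow, Quaternion.coe_commutes]

/-- the row-determinant characteristic-polynomial expansion:
`rdet_j ((tI + A^{k+1})_{j.}(a_{i.}^{(k)})) = Σ_{s=1}^{n} r_s^{(ij)} t^{n−s}`,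
where `r_n^{(ij)} = rdet_j ((A^{k+1})_{j.}(a_{i.}^{(k)}))` and, for
`1 ≤ s ≤ n−1`, `r_s^{(ij)}` is the sum over `α ∈ I_{s,n}{j}` of the `j`-th
row determinants of the corresponding principal submatrices. -/
theorem stmt15 {n : ℕ} (A : Matrix (Fin n) (Fin n) ℍ[ℝ]) (hA : A.IsHermitian)
    (k : ℕ) (hk : isInd A k) (t : ℝ) (i j : Fin n) (r : ℕ → ℍ[ℝ])
    (hrn : r n = rdet ((A ^ (k + 1)).updateRow j fun l => (A ^ k) i l) j)
    (hrs : ∀ s, 1 ≤ s → s ≤ n - 1 →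
      r s = rdetPM ((A ^ (k + 1)).updateRow j fun l => (A ^ k) i l) s j) :
    rdet (((t : ℍ[ℝ]) • (1 : Matrix (Fin n) (Fin n) ℍ[ℝ]) + A ^ (k + 1)).updateRow j
        fun l => (A ^ k) i l) j =
      ∑ s ∈ Finset.Icc 1 n, r s * (t : ℍ[ℝ]) ^ (n - s) :=
  stmt15_general A k t i j r hrn hrs
end
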